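/- arXiv:1809.00122 — 9 statements merged into one kernel-verified Lean document; each statement's English description precedes it below -/
import Mathlib

section
/- For the power series A_0 with A_0(0)=0 satisfying z(1+A_0)^3=A_0, one has the identity 1/(1-2A_0(z)) = \sum_{n\ge 0} \binom{3n-1}{n} z^n (with the n=0 term equal to 1). -/
/-!
Write `S = (1 - 2A₀)⁻¹`. Eliminating `A₀ = (S - 1) / (2S)` from `X(1 + A₀)³ = A₀` shows that `S` is
algebraic: `X(3S - 1)³ = 4S²(S - 1)`. Applying the Euler operator `θ = X d/dX` to this equation and
eliminating `X` gives `2θS = S(S - 1)(3S - 1)`, so `θ` maps `ℚ[S]` to itself, and one more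
application yields the hypergeometric equation `2θ(2θ - 1)S + 2X = 3X(3θ + 1)(3θ + 2)S`.
On coefficients this reads `2(n+1)(2n+1) s_{n+1} = 3(3n+1)(3n+2) s_n - 2[n = 0]`, a recurrence
that `binom(3n - 1, n)` satisfies too, and both sequences start with `1`.
-/

open PowerSeries

section EulerOperator

variable {R : Type*} [CommRing R]

noncomputable def eulerOp : Derivation R R⟦X⟧ R⟦X⟧ := (X : R⟦X⟧) • d⁄dX R

theorem eulerOp_apply (f : R⟦X⟧) : eulerOp f = X * d⁄dX R f := rfl

@[simp]
theorem eulerOp_X : eulerOp (X : R⟦X⟧) = X := by simp [eulerOp_apply]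

@[simp]
theorem eulerOp_ofNat (n : ℕ) [n.AtLeastTwo] : eulerOp (ofNat(n) : R⟦X⟧) = 0 := by
  rw [← Nat.cast_ofNat, Derivation.map_natCast]

theorem coeff_eulerOp (n : ℕ) (f : R⟦X⟧) : coeff n (eulerOp f) = n * coeff n f := by
  cases n with
  | zero => simp [eulerOp_apply]
  | succ n => simp [eulerOp_apply, coeff_derivative, mul_comm]

theorem coeff_succ_of_hypergeometric {f : R⟦X⟧}
    (h : C 4 * eulerOp (eulerOp f) - C 2 * eulerOp f + C 2 * X =
      X * (C 27 * eulerOp (eulerOp f) + C 27 * eulerOp f + C 6 * f)) (n : ℕ) :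
    2 * (n + 1) * (2 * n + 1) * coeff (n + 1) f =
      3 * (3 * n + 1) * (3 * n + 2) * coeff n f - if n = 0 then 2 else 0 := by
  have hc := congrArg (coeff (n + 1)) h
  simp only [map_add, map_sub, coeff_C_mul, coeff_succ_X_mul, coeff_eulerOp, coeff_X,
    mul_ite, mul_one, mul_zero] at hc
  push_cast at hc
  linear_combination hc

end EulerOperator

section CubicEquation

variable {R : Type*} [CommRing R] [IsDomain R] [CharZero R] {S : R⟦X⟧}

theorem two_mul_eulerOp_of_cubic (hS : constantCoeff S = 1)
    (hG : X * (3 * S - 1) ^ 3 = 4 * S ^ 2 * (S - 1)) :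
    2 * eulerOp S = S * (S - 1) * (3 * S - 1) := by
  have h4S : 4 * S ≠ 0 := fun h => by simpa [hS, map_ofNat] using congrArg constantCoeff h
  have hdG := congrArg eulerOp hG
  simp only [Derivation.leibniz, Derivation.leibniz_pow, map_sub, Derivation.map_one_eq_zero,
    eulerOp_X, eulerOp_ofNat, smul_eq_mul, nsmul_eq_mul] at hdG
  have h : 4 * S * (S * (S - 1) * (3 * S - 1) - 2 * eulerOp S) = 0 := by
    linear_combination (3 * S - 1) * hdG - (9 * eulerOp S + 3 * S - 1) * hG
  linear_combination -(mul_eq_zero.mp h).resolve_left h4S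

/-- `2θ(2θ - 1)S + 2X = 3X(3θ + 1)(3θ + 2)S` with `θ = eulerOp`, expanded. -/
theorem hypergeometric_of_cubic (hS : constantCoeff S = 1)
    (hG : X * (3 * S - 1) ^ 3 = 4 * S ^ 2 * (S - 1)) :
    C 4 * eulerOp (eulerOp S) - C 2 * eulerOp S + C 2 * X =
      X * (C 27 * eulerOp (eulerOp S) + C 27 * eulerOp S + C 6 * S) := by
  have hθ := two_mul_eulerOp_of_cubic hS hG
  have hθθ := congrArg eulerOp hθ
  simp only [Derivation.leibniz, map_sub, Derivation.map_one_eq_zero, eulerOp_ofNat,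
    smul_eq_mul] at hθθ
  have hW : 2 * (3 * S - 1) ^ 3 ≠ 0 := fun h => by
    have h0 := congrArg constantCoeff h
    simp [hS, map_ofNat] at h0
    norm_num at h0
  refine mul_left_cancel₀ hW ?_
  simp only [map_ofNat]
  linear_combination (-2 * (27 * eulerOp (eulerOp S) + 27 * eulerOp S + 6 * S - 2)) * hG
    + (4 * (3 * S - 1) ^ 3 - 108 * S ^ 2 * (S - 1)) * hθθ
    + ((2 * (3 * S - 1) ^ 3 - 54 * S ^ 2 * (S - 1)) * (9 * S ^ 2 - 8 * S + 1)
      - 2 * (3 * S - 1) ^ 3 - 108 * S ^ 2 * (S - 1)) * hθ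

end CubicEquation

theorem Nat.mul_choose_three_mul_add_five (m : ℕ) :
    2 * (m + 2) * (2 * m + 3) * (3 * m + 5).choose (m + 2) =
      3 * (3 * m + 4) * (3 * m + 5) * (3 * m + 2).choose (m + 1) := by
  have h1 : (3 * m + 3) * (3 * m + 2).choose (m + 1) = (3 * m + 3).choose (m + 2) * (m + 2) :=
    Nat.add_one_mul_choose_eq _ _
  have h2 : (3 * m + 3).choose (m + 2) * (3 * m + 4) = (3 * m + 4).choose (m + 2) * (2 * m + 2) := by
    rw [Nat.choose_mul_succ_eq, show 3 * m + 3 + 1 - (m + 2) = 2 * m + 2 by omega]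
  have h3 : (3 * m + 4).choose (m + 2) * (3 * m + 5) = (3 * m + 5).choose (m + 2) * (2 * m + 3) := by
    rw [Nat.choose_mul_succ_eq, show 3 * m + 4 + 1 - (m + 2) = 2 * m + 3 by omega]
  refine Nat.eq_of_mul_eq_mul_left (Nat.succ_pos m) ?_
  zify at h1 h2 h3 ⊢
  linear_combination -2 * (m + 1) * (m + 2) * h3 - (m + 2) * (3 * m + 5) * h2
    - (3 * m + 4) * (3 * m + 5) * h1

theorem choose_three_mul_sub_one_recurrence {R : Type*} [CommRing R] (n : ℕ) :
    2 * (n + 1) * (2 * n + 1) * ((3 * (n + 1) - 1).choose (n + 1) : R) =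
      3 * (3 * n + 1) * (3 * n + 2) * ((3 * n - 1).choose n : R) - if n = 0 then 2 else 0 := by
  cases n with
  | zero => norm_num
  | succ m =>
    rw [if_neg m.succ_ne_zero, sub_zero, show 3 * (m + 1 + 1) - 1 = 3 * m + 5 by omega,
      show 3 * (m + 1) - 1 = 3 * m + 2 by omega, show m + 1 + 1 = m + 2 from rfl]
    have h := congrArg (Nat.cast : ℕ → R) (Nat.mul_choose_three_mul_add_five m)
    push_cast at h ⊢
    linear_combination h

theorem eq_of_recurrence {R : Type*} [CommRing R] [IsDomain R] {u v : ℕ → R} (p q r : ℕ → R)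
    (hp : ∀ n, p n ≠ 0) (hu : ∀ n, p n * u (n + 1) = q n * u n - r n)
    (hv : ∀ n, p n * v (n + 1) = q n * v n - r n) (h0 : u 0 = v 0) : u = v := by
  funext n
  induction n with
  | zero => exact h0
  | succ n ih => exact mul_left_cancel₀ (hp n) (by rw [hu, hv, ih])

/-- For the formal power series `A₀` with `A₀(0) = 0` satisfying `z(1+A₀)^3 = A₀`,
one has `1/(1-2A₀(z)) = ∑_{n ≥ 0} binom(3n-1, n) z^n` (with the `n = 0` term equal to `1`). -/
theorem stmt_2 (A₀ : PowerSeries ℚ) (h0 : constantCoeff A₀ = 0)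
    (hA : X * (1 + A₀) ^ 3 = A₀) :
    (1 - 2 * A₀)⁻¹ = PowerSeries.mk fun n => (Nat.choose (3 * n - 1) n : ℚ) := by
  set S := (1 - 2 * A₀)⁻¹
  have hS : S * (1 - 2 * A₀) = 1 := PowerSeries.inv_mul_cancel _ (by simp [h0])
  have hS0 : constantCoeff S = 1 := by simp [S, h0]
  -- certificate from `3S - 1 = 2S(1 + A₀) + (S(1 - 2A₀) - 1)`
  have hG : X * (3 * S - 1) ^ 3 = 4 * S ^ 2 * (S - 1) := by
    linear_combination 8 * S ^ 3 * hA + (X * ((3 * S - 1) ^ 2 + (3 * S - 1) * 2 * S * (1 + A₀)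
      + 4 * S ^ 2 * (1 + A₀) ^ 2) - 4 * S ^ 2) * hS
  have hcoeff : (fun n => coeff n S) = fun n => ((3 * n - 1).choose n : ℚ) :=
    eq_of_recurrence (fun n => 2 * (n + 1) * (2 * n + 1)) (fun n => 3 * (3 * n + 1) * (3 * n + 2))
      (fun n => if n = 0 then 2 else 0) (fun n => by positivity)
      (coeff_succ_of_hypergeometric (hypergeometric_of_cubic hS0 hG))
      choose_three_mul_sub_one_recurrence (by simp [hS0])
  ext n
  simpa using congrFun hcoeff n
end

section
/- For the power series A_0 with A_0(0)=0 satisfying z(1+A_0)^3=A_0, one has (1+A_0(z))/(1-2A_0(z)) = \sum_{n\ge 0} \binom{3n}{n} z^n. -/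
/-!
Implicit differentiation of `X (1 + A)³ = A` gives `A' (1 - 2A) = (1 + A)⁴`, from which
`S = (1 + A) / (1 - 2A)` satisfies `X (4 - 27X) S'' + (2 - 54X) S' = 6S`. Comparing coefficients,
`2 (n + 1) (2n + 1) sₙ₊₁ = 3 (3n + 1) (3n + 2) sₙ`, the recurrence of `binom(3n, n)`,
and `s₀ = 1`.
-/

open PowerSeries

theorem Nat.choose_three_mul_succ (n : ℕ) :
    2 * (n + 1) * (2 * n + 1) * (3 * (n + 1)).choose (n + 1) =
      3 * (3 * n + 1) * (3 * n + 2) * (3 * n).choose n := by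
  have h₁ := Nat.add_one_mul_choose_eq (3 * n + 2) n
  have h₂ := Nat.choose_mul_succ_eq (3 * n + 1) n
  have h₃ := Nat.choose_mul_succ_eq (3 * n) n
  rw [show 3 * n + 1 + 1 - n = 2 * n + 2 by omega] at h₂
  rw [show 3 * n + 1 - n = 2 * n + 1 by omega] at h₃
  rw [show 3 * (n + 1) = 3 * n + 2 + 1 by ring]
  zify at *
  linear_combination (-2 * (2 * n + 1)) * h₁ - 3 * (2 * n + 1) * h₂ - 3 * (3 * n + 2) * h₃

@[simp]
lemma Derivation.map_ofNat {R A M : Type*} [CommSemiring R] [CommSemiring A] [AddCommMonoid M]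
    [Algebra R A] [Module A M] [Module R M] (D : Derivation R A M) (n : ℕ) [n.AtLeastTwo] :
    D (no_index (OfNat.ofNat n : A)) = 0 :=
  D.map_natCast n

namespace PowerSeries

@[simp]
lemma coeff_ofNat_mul {R : Type*} [Semiring R] (m n : ℕ) [m.AtLeastTwo] (F : R⟦X⟧) :
    coeff n ((no_index (OfNat.ofNat m : R⟦X⟧)) * F) = OfNat.ofNat m * coeff n F := by
  rw [← map_ofNat C m, coeff_C_mul]

lemma coeff_X_mul_derivative {R : Type*} [CommSemiring R] (F : R⟦X⟧) (n : ℕ) :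
    coeff n (X * d⁄dX R F) = n * coeff n F := by
  cases n with
  | zero => simp
  | succ n => rw [coeff_succ_X_mul, coeff_derivative, mul_comm, Nat.cast_succ]

variable {R : Type*} [CommRing R]

lemma coeff_X_mul_X_mul_derivative_derivative (F : R⟦X⟧) (n : ℕ) :
    coeff n (X * (X * d⁄dX R (d⁄dX R F))) = n * (n - 1) * coeff n F := by
  cases n with
  | zero => simp
  | succ n =>
    rw [coeff_succ_X_mul, coeff_X_mul_derivative, coeff_derivative]
    push_cast
    ring

lemma coeff_succ_of_ode {F : R⟦X⟧}
    (hF : X * (4 - 27 * X) * d⁄dX R (d⁄dX R F) + (2 - 54 * X) * d⁄dX R F = 6 * F) (n : ℕ) :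
    2 * (n + 1) * (2 * n + 1) * coeff (n + 1) F = 3 * (3 * n + 1) * (3 * n + 2) * coeff n F := by
  have hF' : 4 * (X * d⁄dX R (d⁄dX R F)) + 2 * d⁄dX R F =
      27 * (X * (X * d⁄dX R (d⁄dX R F))) + 54 * (X * d⁄dX R F) + 6 * F := by
    linear_combination hF
  have h := congrArg (coeff n) hF'
  simp only [map_add, coeff_ofNat_mul, coeff_X_mul_derivative,
    coeff_X_mul_X_mul_derivative_derivative, coeff_derivative] at h
  linear_combination h

section Cubic

variable {A S : R⟦X⟧}

lemma derivative_mul_one_sub_two_mul (hA : X * (1 + A) ^ 3 = A) :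
    d⁄dX R A * (1 - 2 * A) = (1 + A) ^ 4 := by
  have hD := congrArg (d⁄dX R) hA
  simp only [Derivation.leibniz, Derivation.leibniz_pow, Nat.add_one_sub_one, map_add,
    Derivation.map_one_eq_zero, zero_add, smul_eq_mul, nsmul_eq_mul, Nat.cast_ofNat, derivative_X,
    mul_one] at hD
  linear_combination 3 * d⁄dX R A * hA - (1 + A) * hD

lemma derivative_mul_one_sub_two_mul_pow_three (hA : X * (1 + A) ^ 3 = A)
    (hS : S * (1 - 2 * A) = 1 + A) :
    d⁄dX R S * (1 - 2 * A) ^ 3 = 3 * (1 + A) ^ 4 := by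
  have hD := congrArg (d⁄dX R) hS
  simp only [Derivation.leibniz, map_sub, Derivation.map_one_eq_zero, smul_eq_mul,
    Derivation.map_ofNat, mul_zero, add_zero, zero_sub, mul_neg, map_add, zero_add] at hD
  linear_combination (1 - 2 * A) ^ 2 * hD + 2 * d⁄dX R A * (1 - 2 * A) * hS
    + 3 * derivative_mul_one_sub_two_mul hA

lemma derivative_derivative_mul_one_sub_two_mul_pow_five (hA : X * (1 + A) ^ 3 = A)
    (hS : S * (1 - 2 * A) = 1 + A) :
    d⁄dX R (d⁄dX R S) * (1 - 2 * A) ^ 5 = 6 * (1 + A) ^ 7 * (5 - A) := by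
  have hS1 := derivative_mul_one_sub_two_mul_pow_three hA hS
  have hD := congrArg (d⁄dX R) hS1
  simp only [Derivation.leibniz, Derivation.leibniz_pow, Nat.add_one_sub_one, map_sub,
    Derivation.map_one_eq_zero, smul_eq_mul, Derivation.map_ofNat, mul_zero, add_zero, zero_sub,
    mul_neg, smul_neg, nsmul_eq_mul, Nat.cast_ofNat, map_add, zero_add] at hD
  linear_combination (1 - 2 * A) ^ 2 * hD
    + 6 * d⁄dX R A * (1 - 2 * A) * hS1
    + (12 * (1 + A) ^ 3 * (1 - 2 * A) + 18 * (1 + A) ^ 4) * derivative_mul_one_sub_two_mul hA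

lemma ode_of_mul_one_sub_two_mul_eq (h0 : constantCoeff A = 0) (hA : X * (1 + A) ^ 3 = A)
    (hS : S * (1 - 2 * A) = 1 + A) :
    X * (4 - 27 * X) * d⁄dX R (d⁄dX R S) + (2 - 54 * X) * d⁄dX R S = 6 * S := by
  have hu : IsUnit ((1 - 2 * A) ^ 5) := (isUnit_iff_constantCoeff.mpr (by simp [h0])).pow 5
  apply hu.mul_right_cancel
  -- once the derivatives are eliminated, what is left vanishes modulo `X * (1 + A) ^ 3 = A`
  linear_combination X * (4 - 27 * X) * derivative_derivative_mul_one_sub_two_mul_pow_five hA hS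
    + (2 - 54 * X) * (1 - 2 * A) ^ 2 * derivative_mul_one_sub_two_mul_pow_three hA hS
    - 6 * (1 - 2 * A) ^ 4 * hS
    + (24 * (1 + A) ^ 4 * (5 - A) - 162 * X * (1 + A) ^ 4 * (5 - A) - 162 * A * (1 + A) * (5 - A)
      - 162 * (1 + A) * (1 - 2 * A) ^ 2) * hA

end Cubic

lemma coeff_eq_choose_of_ode {K : Type*} [Field K] [CharZero K] {F : K⟦X⟧}
    (hF : X * (4 - 27 * X) * d⁄dX K (d⁄dX K F) + (2 - 54 * X) * d⁄dX K F = 6 * F)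
    (h0 : constantCoeff F = 1) (n : ℕ) : coeff n F = (3 * n).choose n := by
  induction n with
  | zero => simpa using h0
  | succ n ih =>
    have hrec := coeff_succ_of_ode hF n
    have hchoose : (2 * (n + 1) * (2 * n + 1) : K) * (3 * (n + 1)).choose (n + 1) =
        3 * (3 * n + 1) * (3 * n + 2) * (3 * n).choose n := by
      exact_mod_cast Nat.choose_three_mul_succ n
    rw [ih, ← hchoose] at hrec
    exact mul_left_cancel₀ (by norm_cast) hrec

end PowerSeries

/-- For the formal power series `A₀` with `A₀(0) = 0` satisfying `z(1+A₀)^3 = A₀`,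
one has `(1+A₀(z))/(1-2A₀(z)) = ∑_{n ≥ 0} binom(3n, n) z^n`. -/
theorem stmt_3 (A₀ : PowerSeries ℚ) (h0 : constantCoeff A₀ = 0)
    (hA : X * (1 + A₀) ^ 3 = A₀) :
    (1 + A₀) * (1 - 2 * A₀)⁻¹ = PowerSeries.mk fun n => (Nat.choose (3 * n) n : ℚ) := by
  have hu : constantCoeff (1 - 2 * A₀) ≠ 0 := by simp [h0]
  have hS : (1 + A₀) * (1 - 2 * A₀)⁻¹ * (1 - 2 * A₀) = 1 + A₀ := by
    rw [mul_assoc, PowerSeries.inv_mul_cancel _ hu, mul_one]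
  have hS0 : constantCoeff ((1 + A₀) * (1 - 2 * A₀)⁻¹) = 1 := by
    simp [h0]
  ext n
  rw [coeff_mk]
  exact coeff_eq_choose_of_ode (ode_of_mul_one_sub_two_mul_eq h0 hA hS) hS0 n
end

section
/- For every nonnegative integer n, \sum_{k=0}^{n} \binom{3k}{k}\binom{3(n-k)}{n-k} equals the coefficient of z^n in ((1+A_0(z))/(1-2A_0(z)))^2, where A_0 is the Fuss–Catalan generating series. -/
/-!
Put `B = 1 + A₀` and `C = ∑ binom(3n, n) zⁿ`; it suffices to show `B = C (1 - 2A₀) = C (3 - 2B)`.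
The series `∑ₖ a/(a+3k) binom(a+3k, k) zᵏ` (which is `Bᵃ`) times `C`, and `∑ₙ binom(a+3n, n) zⁿ`,
satisfy the same recursion `f (a + 1) = f a + z f (a + 3)`, start at `f 0 = C` and have constant
term `1`, hence agree (a Rothe–Hagen identity). At `a = 1` this reads `B C = ∑ binom(3n+1, n) zⁿ`, and
`(2n+1) binom(3n+1, n) = (3n+1) binom(3n, n)` turns the right side into `(3C - B) / 2`.
-/

open PowerSeries

theorem PowerSeries.eq_of_succ_eq_add_X_mul {R : Type*} [Semiring R] {f g : ℕ → R⟦X⟧} (d : ℕ)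
    (hf : ∀ a, f (a + 1) = f a + X * f (a + d)) (hg : ∀ a, g (a + 1) = g a + X * g (a + d))
    (h₀ : f 0 = g 0) (hc : ∀ a, constantCoeff (f a) = constantCoeff (g a)) : f = g := by
  suffices h : ∀ n a, coeff n (f a) = coeff n (g a) from funext fun a => ext fun n => h n a
  intro n
  induction n with
  | zero => simpa using hc
  | succ n ihn =>
    intro a
    induction a with
    | zero => rw [h₀]
    | succ a iha => rw [hf, hg, map_add, map_add, coeff_succ_X_mul, coeff_succ_X_mul, iha, ihn]

theorem Nat.two_mul_add_one_mul_choose_three_mul_add_one (n : ℕ) :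
    (2 * n + 1) * (3 * n + 1).choose n = (3 * n + 1) * (3 * n).choose n := by
  have h := Nat.choose_mul_succ_eq (3 * n) n
  rw [show 3 * n + 1 - n = 2 * n + 1 by omega] at h
  linarith

/-- The coefficient of `z ^ k` in `(1 + A₀) ^ a`. The case `k = 0` is split off because
`a / (a + 3 * k)` is `0 / 0 = 0` at `a = k = 0`. -/
def fussCatalan (a k : ℕ) : ℚ :=
  if k = 0 then 1 else a / (a + 3 * k) * (a + 3 * k).choose k

lemma fussCatalan_zero_right (a : ℕ) : fussCatalan a 0 = 1 := rfl

lemma fussCatalan_zero_succ (k : ℕ) : fussCatalan 0 (k + 1) = 0 := by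
  simp [fussCatalan]

lemma fussCatalan_one (k : ℕ) : fussCatalan 1 k = (3 * k).choose k / (2 * k + 1) := by
  rcases k.eq_zero_or_pos with rfl | hk
  · simp [fussCatalan]
  · have h : ((2 * k + 1) * (3 * k + 1).choose k : ℚ) = (3 * k + 1) * (3 * k).choose k := by
      exact_mod_cast Nat.two_mul_add_one_mul_choose_three_mul_add_one k
    rw [fussCatalan, if_neg hk.ne', Nat.cast_one, add_comm 1 (3 * k)]
    field_simp
    linear_combination h

lemma fussCatalan_of_pos {a : ℕ} (ha : 0 < a) (k : ℕ) :
    fussCatalan a k = a / (a + 3 * k) * (a + 3 * k).choose k := by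
  rcases k.eq_zero_or_pos with rfl | hk
  · simp [fussCatalan, ha.ne']
  · rw [fussCatalan, if_neg hk.ne']

lemma fussCatalan_succ_succ (a k : ℕ) :
    fussCatalan (a + 1) (k + 1) = fussCatalan a (k + 1) + fussCatalan (a + 3) k := by
  set N := a + 3 * k + 3
  have pascal : ((N + 1).choose (k + 1) : ℚ) = N.choose k + N.choose (k + 1) := by
    exact_mod_cast Nat.choose_succ_succ N k
  have absorb : (N.choose (k + 1) * (k + 1) : ℚ) = N.choose k * (a + 2 * k + 3) := by
    have h := Nat.choose_succ_right_eq N k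
    rw [show N - k = a + 2 * k + 3 by omega] at h
    exact_mod_cast h
  rw [fussCatalan_of_pos (show 0 < a + 3 by omega), fussCatalan, fussCatalan,
    if_neg k.succ_ne_zero, if_neg k.succ_ne_zero, show a + 1 + 3 * (k + 1) = N + 1 by omega,
    show a + 3 * (k + 1) = N by omega, show a + 3 + 3 * k = N by omega, pascal]
  push_cast
  field_simp
  linear_combination 3 * ((a : ℚ) + 3 * k + 3) * absorb

def fussCatalanSeries (a : ℕ) : ℚ⟦X⟧ := mk (fussCatalan a)

def chooseSeries (a : ℕ) : ℚ⟦X⟧ := mk fun n => ((a + 3 * n).choose n : ℚ)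

lemma fussCatalanSeries_zero : fussCatalanSeries 0 = 1 := by
  ext (_ | k) <;> simp [fussCatalanSeries, fussCatalan_zero_succ, coeff_one, fussCatalan_zero_right]

lemma fussCatalanSeries_succ (a : ℕ) :
    fussCatalanSeries (a + 1) = fussCatalanSeries a + X * fussCatalanSeries (a + 3) := by
  ext (_ | k) <;> simp [fussCatalanSeries, fussCatalan_succ_succ, fussCatalan_zero_right]

lemma chooseSeries_succ (a : ℕ) :
    chooseSeries (a + 1) = chooseSeries a + X * chooseSeries (a + 3) := by
  ext (_ | n)
  · simp [chooseSeries]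
  · simp only [chooseSeries, map_add, coeff_succ_X_mul, coeff_mk]
    rw [show a + 1 + 3 * (n + 1) = (a + 3 * n + 3) + 1 by ring, Nat.choose_succ_succ',
      show a + 3 * (n + 1) = a + 3 * n + 3 by ring, show a + 3 + 3 * n = a + 3 * n + 3 by ring]
    push_cast
    ring

theorem fussCatalanSeries_mul_chooseSeries_zero (a : ℕ) :
    fussCatalanSeries a * chooseSeries 0 = chooseSeries a := by
  refine congrFun (PowerSeries.eq_of_succ_eq_add_X_mul
    (f := fun a => fussCatalanSeries a * chooseSeries 0) 3 (fun a => ?_) chooseSeries_succ ?_ ?_) a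
  · rw [fussCatalanSeries_succ]
    ring
  · simp [fussCatalanSeries_zero]
  · simp [fussCatalanSeries, chooseSeries, fussCatalan_zero_right]

lemma fussCatalanSeries_one :
    fussCatalanSeries 1 = 3 * chooseSeries 0 - 2 * chooseSeries 1 := by
  ext n
  have h : ((2 * n + 1) * (3 * n + 1).choose n : ℚ) = (3 * n + 1) * (3 * n).choose n := by
    exact_mod_cast Nat.two_mul_add_one_mul_choose_three_mul_add_one n
  rw [← map_ofNat C 3, ← map_ofNat C 2]
  simp only [fussCatalanSeries, chooseSeries, fussCatalan_one, coeff_mk, map_sub, coeff_C_mul,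
    zero_add, add_comm 1 (3 * n)]
  field_simp
  linear_combination 2 * h

/-- For every `n`, `∑_{k=0}^{n} binom(3k,k) binom(3(n-k), n-k)` is the coefficient of `z^n`
in `((1+A₀(z))/(1-2A₀(z)))^2`, where `A₀` is the Fuss–Catalan generating series. -/
theorem stmt_4
    (A₀ : PowerSeries ℚ)
    (hA₀ : A₀ = PowerSeries.mk fun n =>
      if n = 0 then 0 else (Nat.choose (3 * n) n : ℚ) / (2 * n + 1)) :
    ∀ n : ℕ,
      (∑ k ∈ Finset.range (n + 1),
          (Nat.choose (3 * k) k : ℚ) * (Nat.choose (3 * (n - k)) (n - k) : ℚ)) =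
        coeff n (((1 + A₀) * (1 - 2 * A₀)⁻¹) ^ 2) := by
  have hB : 1 + A₀ = fussCatalanSeries 1 := by
    ext (_ | n) <;> simp [hA₀, fussCatalanSeries, fussCatalan_one, coeff_one]
  have hquot : (1 + A₀) * (1 - 2 * A₀)⁻¹ = chooseSeries 0 := by
    have hden : constantCoeff (1 - 2 * A₀) ≠ 0 := by simp [hA₀]
    have hrel : 1 + A₀ = chooseSeries 0 * (1 - 2 * A₀) := by
      linear_combination (1 + 2 * chooseSeries 0) * hB + fussCatalanSeries_one +
        2 * fussCatalanSeries_mul_chooseSeries_zero 1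
    rw [hrel, mul_assoc, PowerSeries.mul_inv_cancel _ hden, mul_one]
  intro n
  rw [hquot, sq, coeff_mul, Finset.Nat.sum_antidiagonal_eq_sum_range_succ_mk]
  simp [chooseSeries]
end

section
/- With u_{2n}(a) defined by the recurrence (a^2+1)u_2=1 and (a^2+n^2)u_{2n}=3u_{2(n-1)}+3\sum_{j_1+j_2=n-1}u_{2j_1}u_{2j_2}+\sum_{j_1+j_2+j_3=n-1}u_{2j_1}u_{2j_2}u_{2j_3}-\sum_{2j_1<n}(n-2j_1)^2 u_{2j_1}u_{2(n-j_1)}, the value at a=0 is u_{2n}(0) = (n+1)/2^n for all n\ge 1. -/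
/-!
No `u_{2n}` has a pole at `a = 0`: the right-hand side of the recurrence is a polynomial in
earlier values, and `a² + n²` is invertible in the local ring of `ℚ(a)` at `0`. Evaluation at
`0` is a ring homomorphism on that local ring, so `v n = u_{2n}(0)` satisfies the recurrence with
`a = 0`. For `v n = (n + 1) / 2ⁿ` all convolution sums are `2⁻ᵐ` times explicit polynomials:
`(m - 1)(m + 1)(m + 6) / 6` for pairs, `(m - 2)(m - 1)(m + 1)(m + 5)(m + 12) / 120` for triples,
and `(n - 2)(n - 1)n(n + 1)(n + 12) / 60` for the weighted half sum, which becomes a polynomial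
sum after symmetrizing under `j ↦ n - j`. The recurrence then reduces to a polynomial identity.
-/

open Finset RatFunc
open scoped Polynomial

namespace RatFunc

variable {K : Type*} [Field K]

def regularAt (a : K) : Subring (RatFunc K) where
  carrier := {x | x.denom.eval a ≠ 0}
  one_mem' := by simp
  zero_mem' := by simp
  mul_mem' {x y} hx hy := mt (Polynomial.eval_eq_zero_of_dvd_of_eval_eq_zero (denom_mul_dvd x y))
    (by rw [Polynomial.eval_mul]; exact mul_ne_zero hx hy)
  add_mem' {x y} hx hy := mt (Polynomial.eval_eq_zero_of_dvd_of_eval_eq_zero (denom_add_dvd x y))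
    (by rw [Polynomial.eval_mul]; exact mul_ne_zero hx hy)
  neg_mem' {x} hx :=
    mt (Polynomial.eval_eq_zero_of_dvd_of_eval_eq_zero ((denom_dvd x.denom_ne_zero).2
      ⟨-x.num, by rw [map_neg, neg_div, num_div_denom]⟩)) hx

noncomputable def evalRingHom (a : K) : regularAt a →+* K where
  toFun x := eval (RingHom.id K) a x
  map_one' := eval_one _ _
  map_zero' := eval_zero _ _
  map_mul' x y := eval_mul _ _ x.2 y.2
  map_add' x y := eval_add _ _ x.2 y.2

theorem algebraMap_mem_regularAt (a : K) (p : K[X]) :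
    algebraMap K[X] (RatFunc K) p ∈ regularAt a := by
  show (denom _).eval a ≠ 0
  simp [denom_algebraMap]

theorem inv_algebraMap_mem_regularAt {a : K} {p : K[X]} (hp : p.eval a ≠ 0) :
    (algebraMap K[X] (RatFunc K) p)⁻¹ ∈ regularAt a := by
  have hp0 : p ≠ 0 := by rintro rfl; simp at hp
  refine mt (Polynomial.eval_eq_zero_of_dvd_of_eval_eq_zero ((denom_dvd hp0).2 ⟨1, ?_⟩)) hp
  rw [map_one, one_div]

theorem mem_regularAt_and_eval_of_algebraMap_mul_eq {a : K} {p : K[X]} (hp : p.eval a ≠ 0)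
    {x y : RatFunc K} (hy : y ∈ regularAt a) (h : algebraMap K[X] (RatFunc K) p * x = y) :
    x ∈ regularAt a ∧ p.eval a * eval (RingHom.id K) a x = eval (RingHom.id K) a y := by
  have hp0 : algebraMap K[X] (RatFunc K) p ≠ 0 :=
    algebraMap_ne_zero (by rintro rfl; simp at hp)
  have hx : x ∈ regularAt a := by
    rw [← inv_mul_cancel_left₀ hp0 x, h]
    exact mul_mem (inv_algebraMap_mem_regularAt hp) hy
  refine ⟨hx, ?_⟩
  rw [← h, eval_mul _ _ (algebraMap_mem_regularAt a p) hx, eval_algebraMap]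
  rfl

end RatFunc

section Recurrence

variable {R T : Type*} [CommRing R] [CommRing T]

-- Verbatim the right-hand side of the recurrence, with `v k` in place of `u_{2k}`.
def recurrenceRHS (v : ℕ → R) (n : ℕ) : R :=
  3 * v (n - 1)
  + 3 * ∑ p ∈ (Finset.HasAntidiagonal.antidiagonal (n - 1)).filter
      (fun p => 1 ≤ p.1 ∧ 1 ≤ p.2), v p.1 * v p.2
  + ∑ t ∈ (Finset.Nat.antidiagonalTuple 3 (n - 1)).filter
      (fun t => ∀ i, 1 ≤ t i), ∏ i, v (t i)
  - ∑ j ∈ (Finset.Ico 1 n).filter (fun j => 2 * j < n),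
      ((n - 2 * j : ℕ) : R) ^ 2 * v j * v (n - j)

theorem recurrenceRHS_congr {v w : ℕ → R} {n : ℕ} (hn : 2 ≤ n)
    (h : ∀ k ∈ Ico 1 n, v k = w k) : recurrenceRHS v n = recurrenceRHS w n := by
  have h' : ∀ {k}, 1 ≤ k → k < n → v k = w k := fun h1 h2 => h _ (mem_Ico.2 ⟨h1, h2⟩)
  unfold recurrenceRHS
  congr 1
  · congr 1
    · rw [h' (by omega) (by omega), sum_congr rfl fun p hp => ?_]
      simp only [mem_filter, HasAntidiagonal.mem_antidiagonal] at hp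
      rw [h' hp.2.1 (by omega), h' hp.2.2 (by omega)]
    · refine sum_congr rfl fun t ht => prod_congr rfl fun i _ => ?_
      simp only [mem_filter, Nat.mem_antidiagonalTuple] at ht
      have hti : t i ≤ ∑ j, t j := single_le_sum (fun j _ => Nat.zero_le (t j)) (mem_univ i)
      exact h' (ht.2 i) (by omega)
  · refine sum_congr rfl fun j hj => ?_
    simp only [mem_filter, mem_Ico] at hj
    rw [h' hj.1.1 hj.1.2, h' (by omega) (by omega)]

theorem map_recurrenceRHS (f : R →+* T) (v : ℕ → R) (n : ℕ) :
    f (recurrenceRHS v n) = recurrenceRHS (fun k => f (v k)) n := by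
  simp [recurrenceRHS, map_sum, map_prod, map_ofNat]

theorem recurrenceRHS_mem_and_map (S : Subring R) (φ : S →+* T) (g : R → T)
    (hg : ∀ x : S, φ x = g x) {v : ℕ → R} {n : ℕ} (hn : 2 ≤ n)
    (hv : ∀ k ∈ Ico 1 n, v k ∈ S) :
    recurrenceRHS v n ∈ S ∧ g (recurrenceRHS v n) = recurrenceRHS (fun k => g (v k)) n := by
  classical
  let V : ℕ → S := fun k => if h : v k ∈ S then ⟨v k, h⟩ else 0
  have hV : ∀ k ∈ Ico 1 n, (V k : R) = v k := fun k hk => by simp [V, hv k hk]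
  have hlift : recurrenceRHS v n = S.subtype (recurrenceRHS V n) := by
    rw [map_recurrenceRHS]
    exact recurrenceRHS_congr hn fun k hk => (hV k hk).symm
  refine ⟨hlift ▸ (recurrenceRHS V n).2, ?_⟩
  rw [hlift, Subring.subtype_apply, ← hg, map_recurrenceRHS]
  exact recurrenceRHS_congr hn fun k hk => by rw [hg, hV k hk]

end Recurrence

section PowerSums

variable {K : Type*} [Field K] [CharZero K]

lemma sum_range_cast (M : ℕ) : ∑ j ∈ range M, (j : K) = M * (M - 1) / 2 := by
  induction M with
  | zero => simp
  | succ M ih => rw [sum_range_succ, ih]; push_cast; ring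

lemma sum_range_cast_sq (M : ℕ) :
    ∑ j ∈ range M, (j : K) ^ 2 = M * (M - 1) * (2 * M - 1) / 6 := by
  induction M with
  | zero => simp
  | succ M ih => rw [sum_range_succ, ih]; push_cast; ring

lemma sum_range_cast_pow_three (M : ℕ) :
    ∑ j ∈ range M, (j : K) ^ 3 = (M * (M - 1) / 2) ^ 2 := by
  induction M with
  | zero => simp
  | succ M ih => rw [sum_range_succ, ih]; push_cast; ring

lemma sum_range_cast_pow_four (M : ℕ) :
    ∑ j ∈ range M, (j : K) ^ 4 = M * (M - 1) * (2 * M - 1) * (3 * M ^ 2 - 3 * M - 1) / 30 := by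
  induction M with
  | zero => simp
  | succ M ih => rw [sum_range_succ, ih]; push_cast; ring

end PowerSums

lemma sum_filter_antidiagonal_pos {M : Type*} [AddCommMonoid M] (f : ℕ → ℕ → M) (m : ℕ) :
    ∑ p ∈ (antidiagonal m).filter (fun p => 1 ≤ p.1 ∧ 1 ≤ p.2), f p.1 p.2
      = ∑ j ∈ Ico 1 m, f j (m - j) := by
  refine sum_nbij' (fun p => p.1) (fun j => (j, m - j)) ?_ ?_ ?_ ?_ ?_
  all_goals simp only [mem_filter, HasAntidiagonal.mem_antidiagonal, mem_Ico, Prod.forall,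
    Prod.mk.injEq, true_and]
  · omega
  · omega
  · omega
  · simp
  · rintro a b ⟨rfl, -⟩
    rw [Nat.add_sub_cancel_left]

lemma mem_filter_antidiagonalTuple_three_pos {m : ℕ} {t : Fin 3 → ℕ} :
    t ∈ (Nat.antidiagonalTuple 3 m).filter (fun t => ∀ i, 1 ≤ t i) ↔
      t 0 + t 1 + t 2 = m ∧ 1 ≤ t 0 ∧ 1 ≤ t 1 ∧ 1 ≤ t 2 := by
  simp [Nat.mem_antidiagonalTuple, Fin.sum_univ_three, Fin.forall_fin_succ]

lemma sum_filter_antidiagonalTuple_three_pos {M : Type*} [AddCommMonoid M]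
    (f : ℕ → ℕ → ℕ → M) (m : ℕ) :
    ∑ t ∈ (Nat.antidiagonalTuple 3 m).filter (fun t => ∀ i, 1 ≤ t i), f (t 0) (t 1) (t 2)
      = ∑ j ∈ Ico 1 m, ∑ k ∈ Ico 1 (m - j), f j k (m - j - k) := by
  rw [sum_sigma']
  refine sum_nbij' (fun t => ⟨t 0, t 1⟩) (fun x => ![x.1, x.2, m - x.1 - x.2]) ?_ ?_ ?_ ?_ ?_
  all_goals simp only [mem_filter_antidiagonalTuple_three_pos, mem_sigma, mem_Ico, Sigma.forall,
    Matrix.cons_val_zero, Matrix.cons_val_one, Matrix.cons_val_two, Matrix.head_cons,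
    Matrix.tail_cons]
  · omega
  · omega
  · intro t ht
    ext i
    fin_cases i <;> simp only [Fin.zero_eta, Fin.mk_one, Fin.reduceFinMk, Matrix.cons_val_zero,
      Matrix.cons_val_one, Matrix.cons_val_two, Matrix.head_cons, Matrix.tail_cons]
    omega
  · simp
  · intro t ht
    rw [show m - t 0 - t 1 = t 2 by omega]

def uAtZero (k : ℕ) : ℚ := (k + 1) / 2 ^ k

lemma uAtZero_mul_uAtZero_sub {j m : ℕ} (h : j ≤ m) :
    uAtZero j * uAtZero (m - j) = (j + 1) * (m - j + 1) / 2 ^ m := by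
  rw [uAtZero, uAtZero, div_mul_div_comm, ← pow_add, Nat.add_sub_cancel' h, Nat.cast_sub h]

lemma sum_Ico_uAtZero_mul_uAtZero_sub {m : ℕ} (hm : 1 ≤ m) :
    ∑ j ∈ Ico 1 m, uAtZero j * uAtZero (m - j) = (m - 1) * (m + 1) * (m + 6) / 6 / 2 ^ m := by
  rw [sum_congr rfl fun j hj => uAtZero_mul_uAtZero_sub (mem_Ico.1 hj).2.le, ← sum_div,
    sum_Ico_eq_sum_range]
  obtain ⟨M, rfl⟩ := Nat.exists_eq_add_of_le' hm
  simp only [Nat.add_sub_cancel]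
  push_cast
  ring_nf
  simp only [sum_add_distrib, sum_sub_distrib, ← sum_mul, sum_const, card_range, nsmul_eq_mul,
    sum_range_cast, sum_range_cast_sq]
  ring

lemma sum_triples_uAtZero {m : ℕ} (hm : 1 ≤ m) :
    ∑ t ∈ (Nat.antidiagonalTuple 3 m).filter (fun t => ∀ i, 1 ≤ t i), ∏ i, uAtZero (t i)
      = (m - 2) * (m - 1) * (m + 1) * (m + 5) * (m + 12) / 120 / 2 ^ m := by
  simp only [Fin.prod_univ_three]
  rw [sum_filter_antidiagonalTuple_three_pos (fun a b c => uAtZero a * uAtZero b * uAtZero c)]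
  have hinner : ∀ j ∈ Ico 1 m,
      ∑ k ∈ Ico 1 (m - j), uAtZero j * uAtZero k * uAtZero (m - j - k)
      = (j + 1) * ((m - j - 1) * (m - j + 1) * (m - j + 6) / 6) / 2 ^ m := by
    intro j hj
    have hjm := (mem_Ico.1 hj).2
    simp only [mul_assoc, ← mul_sum]
    rw [sum_Ico_uAtZero_mul_uAtZero_sub (by omega), uAtZero, Nat.cast_sub hjm.le, div_mul_div_comm,
      ← pow_add, Nat.add_sub_cancel' hjm.le]
    ring
  rw [sum_congr rfl hinner, ← sum_div, sum_Ico_eq_sum_range]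
  obtain ⟨M, rfl⟩ := Nat.exists_eq_add_of_le' hm
  simp only [Nat.add_sub_cancel]
  push_cast
  ring_nf
  simp only [sum_add_distrib, sum_sub_distrib, ← sum_mul, sum_const, card_range, nsmul_eq_mul,
    sum_range_cast, sum_range_cast_sq, sum_range_cast_pow_three, sum_range_cast_pow_four]
  ring

lemma cast_sub_sq_add_cast_sub_sq {R : Type*} [CommRing R] (a b : ℕ) :
    ((a - b : ℕ) : R) ^ 2 + ((b - a : ℕ) : R) ^ 2 = ((a : R) - b) ^ 2 := by
  rcases le_total a b with h | h
  · rw [Nat.sub_eq_zero_of_le h, Nat.cast_sub h]; ring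
  · rw [Nat.sub_eq_zero_of_le h, Nat.cast_sub h]; ring

lemma sum_half_uAtZero (n : ℕ) :
    ∑ j ∈ (Ico 1 n).filter (fun j => 2 * j < n),
        ((n - 2 * j : ℕ) : ℚ) ^ 2 * uAtZero j * uAtZero (n - j)
      = (n - 2) * (n - 1) * n * (n + 1) * (n + 12) / 60 / 2 ^ n := by
  set g : ℕ → ℚ := fun j => ((n - 2 * j : ℕ) : ℚ) ^ 2 * uAtZero j * uAtZero (n - j)
  -- Truncated subtraction kills the terms with `2 * j ≥ n`, so the filter can be dropped; adding
  -- the reflected sum then replaces `(n - 2 * j : ℕ) ^ 2` by the polynomial `(n - 2 * j) ^ 2`.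
  have hfilter : ∑ j ∈ (Ico 1 n).filter (fun j => 2 * j < n), g j = ∑ j ∈ Ico 1 n, g j := by
    refine sum_filter_of_ne fun j _ hj => ?_
    by_contra h
    exact hj (by simp [g, Nat.sub_eq_zero_of_le (not_lt.1 h)])
  have hreflect : ∑ j ∈ Ico 1 n, g (n - j) = ∑ j ∈ Ico 1 n, g j := by
    rw [sum_Ico_reflect g 1 (Nat.le_succ n), Nat.add_sub_cancel_left, Nat.add_sub_cancel]
  have hsymm : ∀ j ∈ Ico 1 n,
      g j + g (n - j) = ((n : ℚ) - 2 * j) ^ 2 * ((j + 1) * (n - j + 1)) / 2 ^ n := by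
    intro j hj
    have hjn := (mem_Ico.1 hj).2.le
    simp only [g, Nat.sub_sub_self hjn]
    rw [mul_assoc, mul_assoc, mul_comm (uAtZero (n - j)), uAtZero_mul_uAtZero_sub hjn,
      show n - 2 * (n - j) = 2 * j - n by omega, ← add_mul, cast_sub_sq_add_cast_sub_sq]
    push_cast
    ring
  have htwice : 2 * ∑ j ∈ (Ico 1 n).filter (fun j => 2 * j < n), g j
      = ∑ j ∈ Ico 1 n, ((n : ℚ) - 2 * j) ^ 2 * ((j + 1) * (n - j + 1)) / 2 ^ n := by
    rw [two_mul, hfilter]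
    nth_rw 2 [← hreflect]
    rw [← sum_add_distrib, sum_congr rfl hsymm]
  rw [← mul_right_inj' two_ne_zero, htwice, ← sum_div, sum_Ico_eq_sum_range]
  rcases n with _ | M
  · simp
  simp only [Nat.add_sub_cancel]
  push_cast
  ring_nf
  simp only [sum_add_distrib, sum_sub_distrib, ← sum_mul, ← mul_sum, sum_const, card_range,
    nsmul_eq_mul, sum_range_cast, sum_range_cast_sq, sum_range_cast_pow_three,
    sum_range_cast_pow_four]
  ring

theorem recurrenceRHS_uAtZero {n : ℕ} (hn : 2 ≤ n) :
    recurrenceRHS uAtZero n = n ^ 2 * uAtZero n := by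
  obtain ⟨m, rfl⟩ := Nat.exists_eq_add_of_le' (by omega : 1 ≤ n)
  unfold recurrenceRHS
  rw [Nat.add_sub_cancel, sum_filter_antidiagonal_pos (fun a b => uAtZero a * uAtZero b),
    sum_Ico_uAtZero_mul_uAtZero_sub (by omega), sum_triples_uAtZero (by omega), sum_half_uAtZero]
  simp only [uAtZero]
  push_cast
  rw [pow_succ]
  field_simp
  ring

theorem mem_regularAt_and_eval_eq_uAtZero {u : ℕ → RatFunc ℚ} {n : ℕ} (hn : 2 ≤ n)
    (hrec : (X ^ 2 + (n : RatFunc ℚ) ^ 2) * u n = recurrenceRHS u n)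
    (hprev : ∀ k ∈ Ico 1 n,
      u k ∈ regularAt (0 : ℚ) ∧ eval (RingHom.id ℚ) 0 (u k) = uAtZero k) :
    u n ∈ regularAt (0 : ℚ) ∧ eval (RingHom.id ℚ) 0 (u n) = uAtZero n := by
  obtain ⟨hmem_rhs, heval_rhs⟩ := recurrenceRHS_mem_and_map _ (evalRingHom 0)
    (eval (RingHom.id ℚ) 0) (fun _ => rfl) hn fun k hk => (hprev k hk).1
  obtain ⟨hmem, hval⟩ := mem_regularAt_and_eval_of_algebraMap_mul_eq
    (p := Polynomial.X ^ 2 + (n : ℚ[X]) ^ 2) (by simpa using (show n ≠ 0 by omega)) hmem_rhs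
    (by rwa [map_add, map_pow, map_pow, algebraMap_X, map_natCast])
  refine ⟨hmem, mul_left_cancel₀ (pow_ne_zero 2 (Nat.cast_ne_zero.2 (by omega : n ≠ 0))) ?_⟩
  rw [← recurrenceRHS_uAtZero hn, ← recurrenceRHS_congr hn fun k hk => (hprev k hk).2,
    ← heval_rhs, ← hval]
  simp

/-- With `u n` (denoting `u_{2n}(a)`) in `ℚ(a)` defined by `(a²+1)u₂ = 1` and the recurrence
`(a²+n²)u_{2n} = 3u_{2(n-1)} + 3∑_{j₁+j₂=n-1} u_{2j₁}u_{2j₂}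
+ ∑_{j₁+j₂+j₃=n-1} u_{2j₁}u_{2j₂}u_{2j₃} - ∑_{2j₁ < n} (n-2j₁)² u_{2j₁}u_{2(n-j₁)}`,
the value at `a = 0` is `u_{2n}(0) = (n+1)/2ⁿ` for all `n ≥ 1`. -/
theorem stmt_7 (u : ℕ → RatFunc ℚ)
    (h1 : (X ^ 2 + 1) * u 1 = 1)
    (hrec : ∀ n : ℕ, 2 ≤ n →
      (X ^ 2 + (n : RatFunc ℚ) ^ 2) * u n =
        3 * u (n - 1)
        + 3 * ∑ p ∈ (Finset.HasAntidiagonal.antidiagonal (n - 1)).filter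
            (fun p => 1 ≤ p.1 ∧ 1 ≤ p.2), u p.1 * u p.2
        + ∑ t ∈ (Finset.Nat.antidiagonalTuple 3 (n - 1)).filter
            (fun t => ∀ i, 1 ≤ t i), ∏ i, u (t i)
        - ∑ j ∈ (Finset.Ico 1 n).filter (fun j => 2 * j < n),
            ((n - 2 * j : ℕ) : RatFunc ℚ) ^ 2 * u j * u (n - j)) :
    ∀ n : ℕ, 1 ≤ n →
      RatFunc.eval (RingHom.id ℚ) 0 (u n) = ((n : ℚ) + 1) / 2 ^ n := by
  suffices key : ∀ n, 1 ≤ n →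
      u n ∈ regularAt (0 : ℚ) ∧ eval (RingHom.id ℚ) 0 (u n) = uAtZero n from
    fun n hn => (key n hn).2
  intro n
  induction n using Nat.strong_induction_on with
  | _ n ih =>
  intro hn
  obtain rfl | hn2 : n = 1 ∨ 2 ≤ n := by omega
  · obtain ⟨hmem, hval⟩ := mem_regularAt_and_eval_of_algebraMap_mul_eq
      (a := 0) (p := Polynomial.X ^ 2 + 1) (x := u 1) (by simp) (one_mem _)
      (by rwa [map_add, map_pow, algebraMap_X, map_one])
    exact ⟨hmem, by simpa [uAtZero] using hval⟩
  · exact mem_regularAt_and_eval_eq_uAtZero hn2 (hrec n hn2)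
      fun k hk => ih k (mem_Ico.1 hk).2 (mem_Ico.1 hk).1
end

section
/- For any constants C_1 > 0 and C_2, the function u(\tau) = -\frac{C_1 C_2}{4} \tau^{\sqrt{C_1}-1}/(1 - C_2 \tau^{\sqrt{C_1}})^2 satisfies u'' = (u')^2/u - u'/\tau - 8u^2/\tau wherever it is defined and nonzero (\tau>0, 1-C_2\tau^{\sqrt{C_1}} \ne 0, u \ne 0). -/
/-!
With `s = √C₁`, the equation is equivalent (for `u ≠ 0`) to `(τ u'/u)' = -8u`, a form of
Liouville's equation in the variable `log τ`. Writing `D = 1 - C₂ τ^s`, the logarithmic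
derivative of `u` is `u'/u = ℓ := (2s/D - s - 1)/τ`, and `τ ℓ = 2s/D - s - 1` has derivative
`2 s² C₂ τ^(s-1)/D² = -8u`.
-/

open Filter Topology

theorem deriv_deriv_eq_of_hasDerivAt_logDeriv {u ℓ : ℝ → ℝ} {τ : ℝ} (hτ : τ ≠ 0)
    (hu : u τ ≠ 0) (hderiv : ∀ᶠ t in 𝓝 τ, HasDerivAt u (u t * ℓ t) t)
    (hℓ : HasDerivAt ℓ (-(8 * u τ + ℓ τ) / τ) τ) :
    deriv (deriv u) τ = deriv u τ ^ 2 / u τ - deriv u τ / τ - 8 * u τ ^ 2 / τ := by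
  have hu' : HasDerivAt u (u τ * ℓ τ) τ := hderiv.self_of_nhds
  have hderiv_eq : deriv u =ᶠ[𝓝 τ] fun t => u t * ℓ t := hderiv.mono fun t ht => ht.deriv
  have hu'' : HasDerivAt (fun t => u t * ℓ t) _ τ := hu'.mul hℓ
  rw [hderiv_eq.deriv_eq, hu''.deriv, hu'.deriv]
  field_simp
  ring

theorem hasDerivAt_rpow_sub_one_div_one_sub_rpow_sq (c s C : ℝ) {τ : ℝ} (hτ : 0 < τ)
    (hD : 1 - C * τ ^ s ≠ 0) :
    HasDerivAt (fun t => c * t ^ (s - 1) / (1 - C * t ^ s) ^ 2)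
      (c * τ ^ (s - 1) / (1 - C * τ ^ s) ^ 2 * ((2 * s / (1 - C * τ ^ s) - s - 1) / τ)) τ := by
  have hpow (r : ℝ) : HasDerivAt (fun t : ℝ => t ^ r) (r * τ ^ (r - 1)) τ :=
    Real.hasDerivAt_rpow_const (Or.inl hτ.ne')
  have h := ((hpow (s - 1)).const_mul c).div (((hpow s).const_mul C).const_sub 1 |>.pow 2)
    (pow_ne_zero 2 hD)
  refine h.congr_deriv ?_
  simp only [Real.rpow_sub_one hτ.ne', Pi.pow_apply]
  -- `field_simp` normalizes the denominator to this form before looking for its nonvanishing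
  have hD' : 1 - τ ^ s * C ≠ 0 := by rwa [mul_comm]
  push_cast
  field_simp
  ring

theorem hasDerivAt_logDeriv_rpow_sub_one_div_one_sub_rpow_sq (s C : ℝ) {τ : ℝ} (hτ : 0 < τ)
    (hD : 1 - C * τ ^ s ≠ 0) :
    HasDerivAt (fun t => (2 * s / (1 - C * t ^ s) - s - 1) / t)
      (-(8 * (-(s ^ 2 * C / 4) * τ ^ (s - 1) / (1 - C * τ ^ s) ^ 2) +
          (2 * s / (1 - C * τ ^ s) - s - 1) / τ) / τ) τ := by
  have hpow : HasDerivAt (fun t : ℝ => t ^ s) (s * τ ^ (s - 1)) τ :=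
    Real.hasDerivAt_rpow_const (Or.inl hτ.ne')
  have h := (((hasDerivAt_const τ (2 * s)).div ((hpow.const_mul C).const_sub 1) hD).sub_const s
    |>.sub_const 1).div (hasDerivAt_id τ) hτ.ne'
  refine h.congr_deriv ?_
  simp only [Real.rpow_sub_one hτ.ne', Pi.div_apply, id]
  field_simp
  ring

/-- For constants `C₁ > 0` and `C₂`, the function
`u(τ) = -(C₁C₂/4) τ^(√C₁ - 1)/(1 - C₂ τ^(√C₁))²` satisfies
`u'' = (u')²/u - u'/τ - 8u²/τ` wherever it is defined and nonzero
(`τ > 0`, `1 - C₂ τ^(√C₁) ≠ 0`, `u(τ) ≠ 0`). -/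
theorem stmt_9 (C₁ C₂ : ℝ) (hC₁ : 0 < C₁) (u : ℝ → ℝ)
    (hu : ∀ τ : ℝ, 0 < τ →
      u τ = -(C₁ * C₂ / 4) * τ ^ (Real.sqrt C₁ - 1) / (1 - C₂ * τ ^ Real.sqrt C₁) ^ 2) :
    ∀ τ : ℝ, 0 < τ → 1 - C₂ * τ ^ Real.sqrt C₁ ≠ 0 → u τ ≠ 0 →
      deriv (deriv u) τ =
        (deriv u τ) ^ 2 / u τ - deriv u τ / τ - 8 * (u τ) ^ 2 / τ := by
  intro τ hτ hD hu0
  set s := Real.sqrt C₁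
  rw [show C₁ = s ^ 2 from (Real.sq_sqrt hC₁.le).symm] at hu
  have hu_eq (t : ℝ) (ht : 0 < t) :
      u =ᶠ[𝓝 t] fun t => -(s ^ 2 * C₂ / 4) * t ^ (s - 1) / (1 - C₂ * t ^ s) ^ 2 :=
    eventually_of_mem (Ioi_mem_nhds ht) hu
  have hgood : ∀ᶠ t in 𝓝 τ, 0 < t ∧ 1 - C₂ * t ^ s ≠ 0 := by
    have hcont : ContinuousAt (fun t => 1 - C₂ * t ^ s) τ := continuousAt_const.sub
      (continuousAt_const.mul (Real.continuousAt_rpow_const τ s (Or.inl hτ.ne')))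
    exact (eventually_gt_nhds hτ).and (hcont.eventually_ne hD)
  refine deriv_deriv_eq_of_hasDerivAt_logDeriv
    (ℓ := fun t => (2 * s / (1 - C₂ * t ^ s) - s - 1) / t) hτ.ne' hu0 ?_ ?_
  · filter_upwards [hgood] with t ⟨ht, htD⟩
    rw [(hu_eq t ht).self_of_nhds]
    exact (hasDerivAt_rpow_sub_one_div_one_sub_rpow_sq _ s C₂ ht htD).congr_of_eventuallyEq
      (hu_eq t ht)
  · rw [hu τ hτ]
    exact hasDerivAt_logDeriv_rpow_sub_one_div_one_sub_rpow_sq s C₂ hτ hD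
end

section
/- If a solution u of the degenerate third Painlevé equation u'' = (u')^2/u - u'/\tau + (−8u^2 + 2ab)/\tau + b^2/u (with b \ne 0) is meromorphic near a point \tau_z > 0 with u(\tau_z)=0 and u not identically zero, then the zero is simple, i.e., the Taylor expansion at \tau_z has leading term A(\tau-\tau_z) with A^2 = -b^2. In particular a real solution with real b \ne 0 has no zeroes on (0,\infty). -/
open Filter Topology

/-- If a solution `u` of the degenerate third Painlevé equation
`u'' = (u')²/u - u'/τ + (-8u² + 2ab)/τ + b²/u` (here written in the equivalent form
obtained by multiplying through by `τ·u`, which is valid at zeroes of `u`) with `b ≠ 0`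
is analytic near a point `τ_z ≠ 0` with `u(τ_z) = 0` and `u` not identically zero,
then the zero is simple, with leading Taylor coefficient `A = u'(τ_z)` satisfying
`A² = -b²`.  In particular, a real solution with real `b ≠ 0` has no zeroes on `(0, ∞)`. -/
theorem stmt_10 :
    (∀ (a b : ℂ), b ≠ 0 → ∀ (τz : ℂ), τz ≠ 0 → ∀ u : ℂ → ℂ,
      AnalyticAt ℂ u τz →
      (∀ᶠ τ in 𝓝 τz,
        τ * u τ * deriv (deriv u) τ =
          τ * (deriv u τ) ^ 2 - u τ * deriv u τ
            + u τ * (-8 * (u τ) ^ 2 + 2 * a * b) + τ * b ^ 2) →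
      (¬ ∀ᶠ τ in 𝓝 τz, u τ = 0) →
      u τz = 0 →
      deriv u τz ≠ 0 ∧ (deriv u τz) ^ 2 = -b ^ 2) ∧
    (∀ (a b : ℝ), b ≠ 0 → ∀ u : ℝ → ℝ,
      (∀ τ : ℝ, 0 < τ → AnalyticAt ℝ u τ) →
      (∀ τ : ℝ, 0 < τ →
        τ * u τ * deriv (deriv u) τ =
          τ * (deriv u τ) ^ 2 - u τ * deriv u τ
            + u τ * (-8 * (u τ) ^ 2 + 2 * a * b) + τ * b ^ 2) →
      ∀ τ : ℝ, 0 < τ → u τ ≠ 0) := by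
  constructor
  · intro a b hb τz hτz u _ heq _ h0
    have h := heq.self_of_nhds
    rw [h0] at h
    have hd2 : (deriv u τz) ^ 2 = -b ^ 2 := by
      have h2 : τz * ((deriv u τz) ^ 2 + b ^ 2) = 0 := by ring_nf; linear_combination -h
      rcases mul_eq_zero.mp h2 with h3 | h3
      · exact absurd h3 hτz
      · linear_combination h3
    refine ⟨?_, hd2⟩
    intro hd0
    apply hb
    have : b ^ 2 = 0 := by
      have := hd2
      rw [hd0] at this
      simpa using this.symm
    exact pow_eq_zero_iff (by norm_num) |>.mp this
  · intro a b hb u _ heqn τ hτ h0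
    have h := heqn τ hτ
    rw [h0] at h
    have hb2 : 0 < b ^ 2 := by positivity
    nlinarith [sq_nonneg (deriv u τ)]
end

section
/- The sequence X_n = \binom{3n}{n-1} \cdot \frac{2^{2n+1}}{3^{3n+2}} \cdot \frac{3n^2+3n+2}{n+1} is strictly increasing in n \ge 1; equivalently, X_{n+1}/X_n = \frac{(n+1/3)(n+2/3)(n+1)(n^2+3n+8/3)}{n(n+3/2)(n+2)(n^2+n+2/3)} > 1 for all n \ge 1. -/
lemma key_q (m : ℕ) :
    ((3*(m+2)).choose (m+1) : ℚ) * (((m:ℚ)+1) * ((2*m+4) * (2*m+5))) =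
    ((3*(m+1)).choose m : ℚ) * ((3*(m:ℚ)+4) * ((3*m+5) * (3*m+6))) := by
  have h1 := Nat.choose_mul_factorial_mul_factorial (show m+1 ≤ 3*(m+2) by omega)
  have h2 := Nat.choose_mul_factorial_mul_factorial (show m ≤ 3*(m+1) by omega)
  have e1 : 3*(m+2) - (m+1) = 2*m+5 := by omega
  have e2 : 3*(m+1) - m = 2*m+3 := by omega
  rw [e1] at h1; rw [e2] at h2
  have hb : ((3*(m+2)).choose (m+1) : ℚ) * ((m+1).factorial) * ((2*m+5).factorial) = ((3*(m+2)).factorial) := by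
    exact_mod_cast congrArg (Nat.cast : ℕ → ℚ) h1
  have ha : ((3*(m+1)).choose m : ℚ) * (m.factorial) * ((2*m+3).factorial) = ((3*(m+1)).factorial) := by
    exact_mod_cast congrArg (Nat.cast : ℕ → ℚ) h2
  have f1 : ((m+1).factorial : ℚ) = ((m:ℚ)+1) * m.factorial := by
    rw [Nat.factorial_succ]; push_cast; ring
  have f2 : ((2*m+5).factorial : ℚ) = (2*(m:ℚ)+5) * ((2*m+4) * (2*m+3).factorial) := by
    rw [show 2*m+5 = (2*m+4)+1 by omega, Nat.factorial_succ,
        show 2*m+4 = (2*m+3)+1 by omega, Nat.factorial_succ]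
    push_cast; ring
  have f3 : ((3*(m+2)).factorial : ℚ) = (3*(m:ℚ)+6) * ((3*m+5) * ((3*m+4) * (3*(m+1)).factorial)) := by
    rw [show 3*(m+2) = (3*m+5)+1 by omega, Nat.factorial_succ,
        show 3*m+5 = (3*m+4)+1 by omega, Nat.factorial_succ,
        show 3*m+4 = (3*(m+1))+1 by omega, Nat.factorial_succ]
    push_cast; ring
  rw [f1, f2, f3] at hb
  have hF : ((m.factorial : ℚ)) * ((2*m+3).factorial) ≠ 0 := by positivity
  apply mul_right_cancel₀ hF
  linear_combination hb - ((3*(m:ℚ)+4) * ((3*m+5) * (3*m+6))) * ha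

lemma ineq_q (m : ℚ) (hm : 0 ≤ m) :
    (m : ℚ) * (m + 1 + 3/2) * (m + 1 + 2) * ((m+1) ^ 2 + (m+1) + 2/3)
      + m * (m + 3/2) * (m + 3) * (m ^ 2 + 3*m + 8/3)
      ≤ ((m : ℚ) + 1 + 1/3) * (m + 1 + 2/3) * (m + 1 + 1) * ((m+1) ^ 2 + 3 * (m+1) + 8/3)
      + m * (m + 3/2) * (m + 3) * (m ^ 2 + 3*m + 8/3) := by
  nlinarith [mul_nonneg hm hm, mul_nonneg (mul_nonneg hm hm) hm,
    mul_nonneg (mul_nonneg (mul_nonneg hm hm) hm) hm]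

/-- The sequence `X_n = binom(3n, n-1) · 2^(2n+1)/3^(3n+2) · (3n²+3n+2)/(n+1)` is strictly
increasing in `n ≥ 1`; equivalently
`X_{n+1}/X_n = (n+1/3)(n+2/3)(n+1)(n²+3n+8/3) / (n(n+3/2)(n+2)(n²+n+2/3)) > 1`. -/
theorem stmt_12 (X : ℕ → ℚ)
    (hX : ∀ n : ℕ, X n =
      (Nat.choose (3 * n) (n - 1) : ℚ) * (2 ^ (2 * n + 1) / 3 ^ (3 * n + 2)) *
        ((3 * n ^ 2 + 3 * n + 2) / (n + 1))) :
    ∀ n : ℕ, 1 ≤ n →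
      X (n + 1) / X n =
        (((n : ℚ) + 1/3) * (n + 2/3) * (n + 1) * (n ^ 2 + 3 * n + 8/3)) /
          ((n : ℚ) * (n + 3/2) * (n + 2) * (n ^ 2 + n + 2/3)) ∧
      X n < X (n + 1) := by
  intro n hn
  obtain ⟨m, rfl⟩ : ∃ m, n = m + 1 := ⟨n - 1, by omega⟩
  have key := key_q m
  have hmq : (0:ℚ) ≤ (m : ℚ) := Nat.cast_nonneg m
  have hapos : 0 < ((3*(m+1)).choose m : ℚ) := by
    exact_mod_cast Nat.choose_pos (show m ≤ 3*(m+1) by omega)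
  have hne1 : ((m:ℚ)+1) * ((2*(m:ℚ)+4) * (2*(m:ℚ)+5)) ≠ 0 := by positivity
  have hb2 : ((3*(m+2)).choose (m+1) : ℚ) =
      ((3*(m+1)).choose m : ℚ) * ((3*(m:ℚ)+4) * ((3*(m:ℚ)+5) * (3*(m:ℚ)+6))) /
        (((m:ℚ)+1) * ((2*(m:ℚ)+4) * (2*(m:ℚ)+5))) := by
    rw [eq_div_iff hne1]; exact key
  have hXpos : 0 < X (m+1) := by
    rw [hX (m+1)]
    have r2 : (m+1) - 1 = m := rfl
    rw [r2]
    have h1 : (0:ℚ) < 2 ^ (2*(m+1)+1) / 3 ^ (3*(m+1)+2) := by positivity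
    have h2 : (0:ℚ) < (3 * ((m+1:ℕ):ℚ) ^ 2 + 3 * ((m+1:ℕ):ℚ) + 2) / (((m+1:ℕ):ℚ) + 1) := by
      push_cast; positivity
    positivity
  have hXne : X (m+1) ≠ 0 := ne_of_gt hXpos
  have hD : (0:ℚ) < (((m+1:ℕ)) : ℚ) * (((m+1:ℕ):ℚ) + 3/2) * (((m+1:ℕ):ℚ) + 2) *
      (((m+1:ℕ):ℚ) ^ 2 + ((m+1:ℕ):ℚ) + 2/3) := by
    push_cast; positivity
  have hDne := ne_of_gt hD
  have hratio : X (m + 1 + 1) / X (m + 1) =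
      ((((m+1:ℕ):ℚ) + 1/3) * (((m+1:ℕ):ℚ) + 2/3) * (((m+1:ℕ):ℚ) + 1) *
          (((m+1:ℕ):ℚ) ^ 2 + 3 * ((m+1:ℕ):ℚ) + 8/3)) /
        ((((m+1:ℕ):ℚ)) * (((m+1:ℕ):ℚ) + 3/2) * (((m+1:ℕ):ℚ) + 2) *
          (((m+1:ℕ):ℚ) ^ 2 + ((m+1:ℕ):ℚ) + 2/3)) := by
    rw [div_eq_div_iff hXne hDne, hX (m+1+1), hX (m+1)]
    have r1 : (m+1+1) - 1 = m+1 := rfl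
    have r2 : (m+1) - 1 = m := rfl
    have c1 : 3*(m+1+1) = 3*(m+2) := by ring
    have c2 : 3*(m+1) = 3*(m+1) := rfl
    rw [r1, r2, c1, hb2]
    have hp2 : (2:ℚ) ^ (2*(m+1+1)+1) = 4 * 2 ^ (2*(m+1)+1) := by
      rw [show 2*(m+1+1)+1 = (2*(m+1)+1)+2 by omega, pow_add]; ring
    have hp3 : (3:ℚ) ^ (3*(m+1+1)+2) = 27 * 3 ^ (3*(m+1)+2) := by
      rw [show 3*(m+1+1)+2 = (3*(m+1)+2)+3 by omega, pow_add]; ring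
    rw [hp2, hp3]
    have h2ne : (2:ℚ) ^ (2*(m+1)+1) ≠ 0 := by positivity
    have h3ne : (3:ℚ) ^ (3*(m+1)+2) ≠ 0 := by positivity
    push_cast
    field_simp
    ring
  refine ⟨hratio, ?_⟩
  have hR : 1 < ((((m+1:ℕ):ℚ) + 1/3) * (((m+1:ℕ):ℚ) + 2/3) * (((m+1:ℕ):ℚ) + 1) *
          (((m+1:ℕ):ℚ) ^ 2 + 3 * ((m+1:ℕ):ℚ) + 8/3)) /
        ((((m+1:ℕ):ℚ)) * (((m+1:ℕ):ℚ) + 3/2) * (((m+1:ℕ):ℚ) + 2) *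
          (((m+1:ℕ):ℚ) ^ 2 + ((m+1:ℕ):ℚ) + 2/3)) := by
    rw [lt_div_iff₀ hD]
    have := ineq_q (m:ℚ) hmq
    push_cast
    nlinarith [this, hmq]
  have h := hratio
  rw [div_eq_iff hXne] at h
  rw [h]
  nlinarith [hR, hXpos]
end

section
/- For n \ge 1, let n_k = \lfloor (n+1)/(k+1) \rfloor for 1 \le k \le n. Then for odd n, \sum_{k=1}^n n_k k^2 \ge n(n+1)(3n+1)/8, and consequently \sum_{k=1}^n n_k k^2 \ge n(3n^2+3n+2)/8 for all n \ge 1. -/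
lemma sumsq (n : ℕ) : ∑ k ∈ Finset.Icc 1 n, (k : ℚ) ^ 2
    = n * (n + 1) * (2 * n + 1) / 6 := by
  induction n with
  | zero => simp
  | succ n ih =>
    rw [Finset.sum_Icc_succ_top (by omega), ih]
    push_cast
    ring

lemma key (n : ℕ) (hn : 1 ≤ n) :
    (∑ k ∈ Finset.Icc 1 n, (((n + 1) / (k + 1) : ℕ) : ℚ) * k ^ 2) ≥
      (∑ k ∈ Finset.Icc 1 n, (k : ℚ) ^ 2)
        + ∑ k ∈ Finset.Icc 1 ((n + 1) / 2 - 1), (k : ℚ) ^ 2 := by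
  have h2 : (∑ k ∈ Finset.Icc 1 ((n + 1) / 2 - 1), (k : ℚ) ^ 2)
      = ∑ k ∈ Finset.Icc 1 n, (if 2 * (k + 1) ≤ n + 1 then (k : ℚ) ^ 2 else 0) := by
    rw [← Finset.sum_filter]
    congr 1
    ext k
    simp only [Finset.mem_Icc, Finset.mem_filter]
    omega
  rw [h2, ← Finset.sum_add_distrib]
  apply Finset.sum_le_sum
  intro k hk
  simp only [Finset.mem_Icc] at hk
  by_cases h : 2 * (k + 1) ≤ n + 1
  · have hd : 2 ≤ (n + 1) / (k + 1) := (Nat.le_div_iff_mul_le (by omega)).mpr (by omega)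
    have hd' : (2 : ℚ) ≤ (((n + 1) / (k + 1) : ℕ) : ℚ) := by exact_mod_cast hd
    simp only [if_pos h]
    nlinarith [sq_nonneg (k : ℚ)]
  · have hd : 1 ≤ (n + 1) / (k + 1) := (Nat.le_div_iff_mul_le (by omega)).mpr (by omega)
    have hd' : (1 : ℚ) ≤ (((n + 1) / (k + 1) : ℕ) : ℚ) := by exact_mod_cast hd
    simp only [if_neg h]
    nlinarith [sq_nonneg (k : ℚ)]

/-- For `n ≥ 1` let `n_k = ⌊(n+1)/(k+1)⌋` for `1 ≤ k ≤ n`.  Then for odd `n`,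
`∑_{k=1}^n n_k k² ≥ n(n+1)(3n+1)/8`, and consequently
`∑_{k=1}^n n_k k² ≥ n(3n²+3n+2)/8` for all `n ≥ 1`. -/
theorem stmt_14 :
    ∀ n : ℕ, 1 ≤ n →
      (Odd n →
        (∑ k ∈ Finset.Icc 1 n, (((n + 1) / (k + 1) : ℕ) : ℚ) * k ^ 2) ≥
          (n : ℚ) * (n + 1) * (3 * n + 1) / 8) ∧
      (∑ k ∈ Finset.Icc 1 n, (((n + 1) / (k + 1) : ℕ) : ℚ) * k ^ 2) ≥
        (n : ℚ) * (3 * n ^ 2 + 3 * n + 2) / 8 := by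
  intro n hn
  have hkey := key n hn
  rw [sumsq, sumsq] at hkey
  constructor
  · intro hodd
    obtain ⟨t, ht⟩ := hodd
    subst ht
    have h1 : (2 * t + 1 + 1) / 2 - 1 = t := by omega
    rw [h1] at hkey
    push_cast at hkey ⊢
    nlinarith [hkey]
  · rcases Nat.even_or_odd n with he | ho
    · obtain ⟨t, ht⟩ := he
      subst ht
      have ht1 : 1 ≤ t := by omega
      have h1 : (t + t + 1) / 2 - 1 = t - 1 := by omega
      rw [h1] at hkey
      have h2 : ((t - 1 : ℕ) : ℚ) = (t : ℚ) - 1 := by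
        push_cast [Nat.cast_sub ht1]; ring
      rw [h2] at hkey
      push_cast at hkey ⊢
      nlinarith [hkey]
    · obtain ⟨t, ht⟩ := ho
      subst ht
      have h1 : (2 * t + 1 + 1) / 2 - 1 = t := by omega
      rw [h1] at hkey
      push_cast at hkey ⊢
      nlinarith [hkey, sq_nonneg (t : ℚ), (by positivity : (0:ℚ) ≤ (t:ℚ))]
end

section
/- For each positive integer n, write n = q(q+1)/2 + l with q maximal such that q(q+1)/2 \le n (so 0 \le l \le q), and set a_n = (3^q + 3^l)/2 - 1. Then the sequence (a_n)_{n\ge1} is strictly increasing. -/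
lemma tri_decomp : ∀ n : ℕ, ∃ q l : ℕ, l ≤ q ∧ n = q * (q + 1) / 2 + l := by
  intro n
  induction n with
  | zero => exact ⟨0, 0, le_refl 0, rfl⟩
  | succ k ih =>
    obtain ⟨q, l, hl, hk⟩ := ih
    rcases lt_or_eq_of_le hl with h | h
    · exact ⟨q, l + 1, h, by omega⟩
    · refine ⟨q + 1, 0, Nat.zero_le _, ?_⟩
      have ht : (q + 1) * (q + 1 + 1) = q * (q + 1) + 2 * (q + 1) := by ring
      omega

/-- Write each `n` via its triangular decomposition `n = q(q+1)/2 + l`, with `q` maximal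
such that `q(q+1)/2 ≤ n` (so `0 ≤ l ≤ q`), and set `a_n = (3^q + 3^l)/2 - 1`.  Then the
sequence `(a_n)_{n ≥ 1}` is strictly increasing. -/
theorem stmt_17 (a : ℕ → ℕ)
    (ha : ∀ n q l : ℕ, n = q * (q + 1) / 2 + l → l ≤ q → a n = (3 ^ q + 3 ^ l) / 2 - 1) :
    ∀ m n : ℕ, 1 ≤ m → m < n → a m < a n := by
  have step : ∀ k : ℕ, a k < a (k + 1) := by
    intro k
    obtain ⟨q, l, hl, hk⟩ := tri_decomp k
    have hodd : ∀ j : ℕ, Odd (3 ^ j) := fun j => Odd.pow ⟨1, rfl⟩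
    have h1 := hodd q
    have h2 := hodd l
    rcases lt_or_eq_of_le hl with h | h
    · have e1 := ha k q l hk hl
      have e2 := ha (k + 1) q (l + 1) (by omega) h
      have h3 := hodd (l + 1)
      have hp : 3 ^ (l + 1) = 3 * 3 ^ l := by ring
      have hle : 3 ^ (l + 1) ≤ 3 ^ q := Nat.pow_le_pow_right (by norm_num) h
      have hpos : 1 ≤ 3 ^ l := Nat.one_le_pow _ _ (by norm_num)
      obtain ⟨c1, hc1⟩ := h1; obtain ⟨c2, hc2⟩ := h2; obtain ⟨c3, hc3⟩ := h3
      omega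
    · subst h
      have e1 := ha k l l hk (le_refl l)
      have ht : (l + 1) * (l + 1 + 1) = l * (l + 1) + 2 * (l + 1) := by ring
      have e2 := ha (k + 1) (l + 1) 0 (by omega) (Nat.zero_le _)
      have h3 := hodd (l + 1)
      have hp : 3 ^ (l + 1) = 3 * 3 ^ l := by ring
      have hpos : 1 ≤ 3 ^ l := Nat.one_le_pow _ _ (by norm_num)
      obtain ⟨c1, hc1⟩ := h1; obtain ⟨c3, hc3⟩ := h3
      simp only [pow_zero] at e2
      omega
  intro m n _ hmn
  exact strictMono_nat_of_lt_succ step hmn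
end
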